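/- Let V be a finite-dimensional real vector space equipped with a quadratic form Q, and let Q₂ denote the standard positive-definite quadratic form (x, y) ↦ x² + y² on ℝ². Then the Clifford algebra CliffordAlgebra(Q.prod Q₂) is isomorphic as an ℝ-algebra to the algebra of 2 × 2 matrices over CliffordAlgebra(−Q), i.e. to Matrix (Fin 2) (Fin 2) (CliffordAlgebra(−Q)). -/

import Mathlib

open CliffordAlgebra

/-- The standard positive-definite quadratic form `(x, y) ↦ x² + y²` on `ℝ²`. -/
noncomputable def Q₂ : QuadraticForm ℝ (ℝ × ℝ) :=
  QuadraticMap.prod QuadraticMap.sq QuadraticMap.sq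

/-!
In `C(Q₂)` the element `ω = e₁e₂` satisfies `ω² = -1`, anticommutes with every vector and is even.
Evenness makes its image in `C(Q ⊕ Q₂)` commute with `V`, so `v ↦ v ⊗ ω`, `w ↦ 1 ⊗ w`
defines an isomorphism `C(Q ⊕ Q₂) ≅ C(-Q) ⊗ C(Q₂)` with inverse `v ⊗ 1 ↦ -(v, 0) ω`,
`1 ⊗ w ↦ (0, w)`. Finally `C(Q₂)` is the split quaternion algebra `ℍ[1, 0, 1]`, which is `M₂`
(via `i ↦ diag(1, -1)`, `j ↦ !![0, 1; 1, 0]`) as soon as `2` is invertible, and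
`A ⊗ M₂ ≅ M₂(A)`.
-/

noncomputable section

open scoped TensorProduct Quaternion

theorem commute_mul_of_anticomm {A : Type*} [Ring A] {a b c : A}
    (hb : a * b = -(b * a)) (hc : a * c = -(c * a)) : Commute a (b * c) := by
  calc a * (b * c) = a * b * c := (mul_assoc _ _ _).symm
    _ = b * c * a := by rw [hb, neg_mul, mul_assoc, hc, mul_neg, neg_neg, mul_assoc]

namespace Algebra.TensorProduct

variable {R A B : Type*} [CommRing R] [Ring A] [Ring B] [Algebra R A] [Algebra R B]

theorem tmul_add_one_tmul_mul_self {a : A} {b ω : B} (hω : ω * ω = -1)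
    (hb : b * ω = -(ω * b)) :
    (a ⊗ₜ[R] ω + 1 ⊗ₜ b) * (a ⊗ₜ[R] ω + 1 ⊗ₜ b) = -((a * a) ⊗ₜ 1) + 1 ⊗ₜ (b * b) := by
  simp only [add_mul, mul_add, tmul_mul_tmul, one_mul, mul_one, hω, hb, TensorProduct.tmul_neg]
  abel

end Algebra.TensorProduct

namespace CliffordAlgebra

section commute
variable {R M₁ M₂ A : Type*} [CommRing R] [AddCommGroup M₁] [AddCommGroup M₂] [Module R M₁]
  [Module R M₂] [Ring A] [Algebra R A] {Q₁ : QuadraticForm R M₁} {Q₂ : QuadraticForm R M₂}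

theorem commute_of_commute_ι {f : CliffordAlgebra Q₁ →ₐ[R] A} {g : CliffordAlgebra Q₂ →ₐ[R] A}
    (h : ∀ m₁ m₂, Commute (f (ι Q₁ m₁)) (g (ι Q₂ m₂))) (x : CliffordAlgebra Q₁)
    (y : CliffordAlgebra Q₂) : Commute (f x) (g y) := by
  induction x using CliffordAlgebra.induction with
  | algebraMap r => rw [AlgHom.commutes]; exact Algebra.commute_algebraMap_left r _
  | add x₁ x₂ h₁ h₂ => rw [map_add]; exact h₁.add_left h₂
  | mul x₁ x₂ h₁ h₂ => rw [map_mul]; exact h₁.mul_left h₂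
  | ι m₁ =>
    induction y using CliffordAlgebra.induction with
    | algebraMap r => rw [AlgHom.commutes]; exact Algebra.commute_algebraMap_right r _
    | add y₁ y₂ h₁ h₂ => rw [map_add]; exact h₁.add_right h₂
    | mul y₁ y₂ h₁ h₂ => rw [map_mul]; exact h₁.mul_right h₂
    | ι m₂ => exact h m₁ m₂

end commute

section prod
variable {R M N : Type*} [CommRing R] [AddCommGroup M] [Module R M] [AddCommGroup N] [Module R N]
  (Q : QuadraticForm R M) {Q' : QuadraticForm R N} {ω : CliffordAlgebra Q'}

local notation "Ω" => map (QuadraticMap.Isometry.inr Q Q') ω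

theorem commute_ι_inl_map_inr (hω₀ : ω ∈ evenOdd Q' 0) (v : M) :
    Commute (ι (Q.prod Q') (v, 0)) Ω := by
  simpa using commute_map_mul_map_of_isOrtho_of_mem_evenOdd_zero_right
    (QuadraticMap.Isometry.inl Q Q') (QuadraticMap.Isometry.inr Q Q')
    (fun _ _ => QuadraticMap.IsOrtho.inl_inr _ _) (ι Q v) ω (ι_mem_evenOdd_one Q v) hω₀

variable (hω : ω * ω = -1) (hι : ∀ n, ι Q' n * ω = -(ω * ι Q' n)) (hω₀ : ω ∈ evenOdd Q' 0)

def prodToTensor :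
    CliffordAlgebra (Q.prod Q') →ₐ[R] CliffordAlgebra (-Q) ⊗[R] CliffordAlgebra Q' :=
  lift _ ⟨LinearMap.coprod ((TensorProduct.mk R _ _).flip ω ∘ₗ ι (-Q))
      (Algebra.TensorProduct.includeRight.toLinearMap ∘ₗ ι Q'), fun ⟨v, n⟩ => by
    simp only [LinearMap.coprod_apply, LinearMap.comp_apply, LinearMap.flip_apply,
      TensorProduct.mk_apply, AlgHom.toLinearMap_apply, Algebra.TensorProduct.includeRight_apply]
    rw [Algebra.TensorProduct.tmul_add_one_tmul_mul_self hω (hι n), ι_sq_scalar, ι_sq_scalar]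
    simp [Algebra.algebraMap_eq_smul_one, TensorProduct.smul_tmul', add_smul,
      Algebra.TensorProduct.one_def, TensorProduct.neg_tmul]⟩

theorem prodToTensor_ι (v : M) (n : N) :
    prodToTensor Q hω hι (ι _ (v, n)) = ι (-Q) v ⊗ₜ ω + 1 ⊗ₜ ι Q' n :=
  lift_ι_apply _ _ _

theorem prodToTensor_map_inr (x : CliffordAlgebra Q') :
    prodToTensor Q hω hι (map (QuadraticMap.Isometry.inr Q Q') x) = 1 ⊗ₜ x := by
  have : (prodToTensor Q hω hι).comp (map (QuadraticMap.Isometry.inr Q Q')) =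
      Algebra.TensorProduct.includeRight :=
    hom_ext <| LinearMap.ext fun n => by simp [prodToTensor_ι]
  exact AlgHom.congr_fun this x

def twistedInl : CliffordAlgebra (-Q) →ₐ[R] CliffordAlgebra (Q.prod Q') :=
  lift _ ⟨-(LinearMap.mulRight R Ω ∘ₗ ι (Q.prod Q') ∘ₗ LinearMap.inl R M N), fun v => by
    have hΩ : Ω * Ω = -1 := by rw [← map_mul, hω, map_neg, map_one]
    simp only [LinearMap.neg_apply, LinearMap.comp_apply, LinearMap.inl_apply,
      LinearMap.mulRight_apply, neg_mul_neg]
    rw [(commute_ι_inl_map_inr Q hω₀ v).symm.mul_mul_mul_comm, ι_sq_scalar, hΩ]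
    simp⟩

theorem twistedInl_ι (v : M) : twistedInl Q hω hω₀ (ι (-Q) v) = -(ι _ (v, 0) * Ω) :=
  lift_ι_apply _ _ _

def tensorToProd :
    CliffordAlgebra (-Q) ⊗[R] CliffordAlgebra Q' →ₐ[R] CliffordAlgebra (Q.prod Q') :=
  Algebra.TensorProduct.lift (twistedInl Q hω hω₀) (map (QuadraticMap.Isometry.inr Q Q')) <|
    commute_of_commute_ι fun v n => by
      rw [twistedInl_ι, map_apply_ι]
      refine (commute_mul_of_anticomm ?_ ?_).neg_right.symm
      · exact ι_mul_ι_comm_of_isOrtho (QuadraticMap.IsOrtho.inr_inl _ _)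
      · simpa using congrArg (map (QuadraticMap.Isometry.inr Q Q')) (hι n)

theorem tensorToProd_tmul (a : CliffordAlgebra (-Q)) (b : CliffordAlgebra Q') :
    tensorToProd Q hω hι hω₀ (a ⊗ₜ b) =
      twistedInl Q hω hω₀ a * map (QuadraticMap.Isometry.inr Q Q') b :=
  Algebra.TensorProduct.lift_tmul _ _ _ _ _

theorem tensorToProd_comp_prodToTensor :
    (tensorToProd Q hω hι hω₀).comp (prodToTensor Q hω hι) = AlgHom.id R _ := by
  refine hom_ext <| LinearMap.ext fun ⟨v, n⟩ => ?_
  simp only [LinearMap.comp_apply, AlgHom.toLinearMap_apply, AlgHom.comp_apply, AlgHom.id_apply]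
  rw [prodToTensor_ι, map_add, tensorToProd_tmul, tensorToProd_tmul, twistedInl_ι, neg_mul,
    mul_assoc, ← map_mul, hω, map_one, one_mul, map_apply_ι, map_neg, map_one, mul_neg_one,
    neg_neg, ← map_add]
  simp

theorem prodToTensor_comp_tensorToProd :
    (prodToTensor Q hω hι).comp (tensorToProd Q hω hι hω₀) = AlgHom.id R _ := by
  refine Algebra.TensorProduct.ext (hom_ext <| LinearMap.ext fun v => ?_)
    (hom_ext <| LinearMap.ext fun n => ?_)
  · simp [tensorToProd_tmul, twistedInl_ι, prodToTensor_ι, prodToTensor_map_inr, hω,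
      TensorProduct.tmul_neg]
  · simp [tensorToProd_tmul, prodToTensor_ι]

def prodEquivTensor :
    CliffordAlgebra (Q.prod Q') ≃ₐ[R] CliffordAlgebra (-Q) ⊗[R] CliffordAlgebra Q' :=
  AlgEquiv.ofAlgHom (prodToTensor Q hω hι) (tensorToProd Q hω hι hω₀)
    (prodToTensor_comp_tensorToProd Q hω hι hω₀) (tensorToProd_comp_prodToTensor Q hω hι hω₀)

end prod

end CliffordAlgebra

namespace CliffordAlgebraQuaternion

open QuaternionAlgebra

variable {R : Type*} [CommRing R]

theorem k_mul_k_eq_neg_one :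
    (quaternionBasis (1 : R) 1).k * (quaternionBasis (1 : R) 1).k = -1 := by
  rw [Basis.k_mul_k]; simp

theorem ι_mul_k (c₁ c₂ : R) (w : R × R) :
    ι (Q c₁ c₂) w * (quaternionBasis c₁ c₂).k = -((quaternionBasis c₁ c₂).k * ι (Q c₁ c₂) w) := by
  set q := quaternionBasis c₁ c₂
  have hw : ι (Q c₁ c₂) w = w.1 • q.i + w.2 • q.j := by
    rw [i_quaternionBasis, j_quaternionBasis, ← map_smul, ← map_smul, ← map_add]
    simp
  refine eq_neg_of_add_eq_zero_left ?_
  simp only [hw, add_mul, mul_add, smul_mul_assoc, mul_smul_comm, q.i_mul_k, q.k_mul_i,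
    q.j_mul_k, q.k_mul_j, zero_smul, zero_mul, add_zero, zero_sub, smul_neg, neg_smul]
  abel

theorem k_mem_evenOdd_zero (c₁ c₂ : R) : (quaternionBasis c₁ c₂).k ∈ evenOdd (Q c₁ c₂) 0 :=
  ι_mul_ι_mem_evenOdd_zero _ _ _

end CliffordAlgebraQuaternion

namespace QuaternionAlgebra

variable {R : Type*} [CommRing R]

def matrixBasis : Basis (Matrix (Fin 2) (Fin 2) R) (1 : R) 0 1 where
  i := !![1, 0; 0, -1]
  j := !![0, 1; 1, 0]
  k := !![0, 1; -1, 0]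
  i_mul_i := by ext i j; fin_cases i <;> fin_cases j <;> simp
  j_mul_j := by ext i j; fin_cases i <;> fin_cases j <;> simp
  i_mul_j := by ext i j; fin_cases i <;> fin_cases j <;> simp
  j_mul_i := by ext i j; fin_cases i <;> fin_cases j <;> simp

theorem matrixBasis_liftHom_apply (x : ℍ[R,1,0,1]) :
    matrixBasis.liftHom x = !![x.re + x.imI, x.imJ + x.imK; x.imJ - x.imK, x.re - x.imI] := by
  ext i j
  fin_cases i <;> fin_cases j <;>
    simp [matrixBasis, Basis.lift, Algebra.algebraMap_eq_smul_one] <;> ring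

variable [Invertible (2 : R)]

def ofMatrix (m : Matrix (Fin 2) (Fin 2) R) : ℍ[R,1,0,1] :=
  ⟨⅟2 * (m 0 0 + m 1 1), ⅟2 * (m 0 0 - m 1 1), ⅟2 * (m 0 1 + m 1 0), ⅟2 * (m 0 1 - m 1 0)⟩

theorem ofMatrix_matrixBasis_liftHom (x : ℍ[R,1,0,1]) :
    ofMatrix (matrixBasis.liftHom x) = x := by
  rw [matrixBasis_liftHom_apply]
  ext <;> simp [ofMatrix, ← two_mul]

theorem matrixBasis_liftHom_ofMatrix (m : Matrix (Fin 2) (Fin 2) R) :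
    matrixBasis.liftHom (ofMatrix m) = m := by
  rw [matrixBasis_liftHom_apply]
  ext i j
  fin_cases i <;> fin_cases j <;> simp [ofMatrix, ← mul_add, ← mul_sub, ← two_mul]

def equivMatrix : ℍ[R,1,0,1] ≃ₐ[R] Matrix (Fin 2) (Fin 2) R :=
  AlgEquiv.ofBijective matrixBasis.liftHom
    ⟨Function.LeftInverse.injective ofMatrix_matrixBasis_liftHom,
      Function.RightInverse.surjective matrixBasis_liftHom_ofMatrix⟩

end QuaternionAlgebra

namespace CliffordAlgebra

variable {R M : Type*} [CommRing R] [Invertible (2 : R)] [AddCommGroup M] [Module R M]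

open CliffordAlgebraQuaternion in
def prodEquivMatrix (Q : QuadraticForm R M) :
    CliffordAlgebra (Q.prod (CliffordAlgebraQuaternion.Q 1 1)) ≃ₐ[R]
      Matrix (Fin 2) (Fin 2) (CliffordAlgebra (-Q)) :=
  (prodEquivTensor Q k_mul_k_eq_neg_one (ι_mul_k 1 1) (k_mem_evenOdd_zero 1 1)).trans <|
    (Algebra.TensorProduct.congr AlgEquiv.refl
      (CliffordAlgebraQuaternion.equiv.trans QuaternionAlgebra.equivMatrix)).trans
    (matrixEquivTensor (Fin 2) R (CliffordAlgebra (-Q))).symm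

end CliffordAlgebra

end

theorem clifford_prod_iso_matrix_general
    (V : Type*) [AddCommGroup V] [Module ℝ V]
    (Q : QuadraticForm ℝ V) :
    Nonempty (CliffordAlgebra (Q.prod Q₂) ≃ₐ[ℝ]
      Matrix (Fin 2) (Fin 2) (CliffordAlgebra (-Q))) := by
  have hQ₂ : Q₂ = CliffordAlgebraQuaternion.Q 1 1 := by ext; simp [Q₂]
  rw [hQ₂]
  exact ⟨CliffordAlgebra.prodEquivMatrix Q⟩

/-- Karoubi: `C⁺(T+2)` is isomorphic to a `2 × 2` matrix algebra over `C⁻(T)`. -/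
theorem clifford_prod_iso_matrix
    (V : Type*) [AddCommGroup V] [Module ℝ V] [FiniteDimensional ℝ V]
    (Q : QuadraticForm ℝ V) :
    Nonempty (CliffordAlgebra (Q.prod Q₂) ≃ₐ[ℝ]
      Matrix (Fin 2) (Fin 2) (CliffordAlgebra (-Q))) :=
  clifford_prod_iso_matrix_general V Q
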